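/- arXiv:0903.3007 — 4 statements merged into one kernel-verified Lean document; each statement's English description precedes it below -/
import Mathlib

section
/- Let u : ℝ → ℂ be continuous on [x₀, ∞) with u(x) · x^s → 1 as x → ∞, where s = σ + iτ and σ > 1. Then Σ_{n=1}^∞ u(x+n) = O(x^{1-σ}) as x → ∞. -/
open Filter Topology Asymptotics

/-! Since `‖x ^ s‖ = x ^ σ`, the hypothesis gives `u(y) = O(y^{-σ})`. As `t ↦ t^{-σ}` is decreasing,
the tail `∑_{n ≥ 1} (x + n)^{-σ}` is at most `∫_x^∞ t^{-σ} dt = x^{1-σ} / (σ - 1)`. -/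

section RpowTail

variable {x σ : ℝ}

lemma sum_range_rpow_neg_add_succ_le (hx : 0 < x) (hσ : 1 < σ) (N : ℕ) :
    ∑ i ∈ Finset.range N, (x + ↑(i + 1)) ^ (-σ) ≤ x ^ (1 - σ) / (σ - 1) := by
  have hanti : AntitoneOn (fun t : ℝ => t ^ (-σ)) (Set.Icc x (x + N)) := fun a ha b _ hab =>
    Real.rpow_le_rpow_of_nonpos (hx.trans_le ha.1) hab (by linarith)
  have hint : ∫ t in x..x + N, t ^ (-σ) = (x ^ (1 - σ) - (x + N) ^ (1 - σ)) / (σ - 1) := by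
    rw [integral_rpow (Or.inr ⟨by linarith, fun h0 => ?_⟩), div_eq_div_iff (by linarith) (by linarith)]
    · ring_nf
    · rw [Set.uIcc_of_le (le_add_of_nonneg_right N.cast_nonneg)] at h0
      exact hx.not_ge h0.1
  calc ∑ i ∈ Finset.range N, (x + ↑(i + 1)) ^ (-σ) ≤ ∫ t in x..x + N, t ^ (-σ) :=
        hanti.sum_le_integral
    _ ≤ x ^ (1 - σ) / (σ - 1) := by
        rw [hint]
        exact div_le_div_of_nonneg_right (sub_le_self _ (by positivity)) (by linarith)

lemma summable_rpow_neg_add_succ (hx : 0 < x) (hσ : 1 < σ) :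
    Summable fun n : ℕ => (x + ↑(n + 1)) ^ (-σ) :=
  summable_of_sum_range_le (fun _ => by positivity) (sum_range_rpow_neg_add_succ_le hx hσ)

lemma tsum_pnat_rpow_neg_add_le (hx : 0 < x) (hσ : 1 < σ) :
    ∑' n : ℕ+, (x + n) ^ (-σ) ≤ x ^ (1 - σ) / (σ - 1) := by
  rw [tsum_pnat_eq_tsum_succ (f := fun n : ℕ => (x + n) ^ (-σ))]
  exact Real.tsum_le_of_sum_range_le (fun _ => by positivity)
    (sum_range_rpow_neg_add_succ_le hx hσ)

end RpowTail

theorem isBigO_tsum_pnat_add_of_isBigO_rpow_neg {E : Type*} [SeminormedAddCommGroup E]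
    {f : ℝ → E} {σ : ℝ} (hσ : 1 < σ) (hf : f =O[atTop] fun y => y ^ (-σ)) :
    (fun x : ℝ => ∑' n : ℕ+, f (x + n)) =O[atTop] fun x => x ^ (1 - σ) := by
  obtain ⟨C, hC, hfC⟩ := hf.exists_nonneg
  obtain ⟨X, hX⟩ := eventually_atTop.mp (hfC.bound.and (eventually_gt_atTop 0))
  have hbound : ∀ y, X ≤ y → ‖f y‖ ≤ C * y ^ (-σ) := fun y hy => by
    obtain ⟨hfy, hy0⟩ := hX y hy
    rwa [Real.norm_of_nonneg (by positivity)] at hfy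
  refine isBigO_iff.mpr ⟨C / (σ - 1), ?_⟩
  filter_upwards [eventually_ge_atTop X, eventually_gt_atTop 0] with x hxX hx
  have hsum : Summable fun n : ℕ+ => C * (x + n) ^ (-σ) :=
    ((summable_pnat_iff_summable_succ (f := fun n : ℕ => (x + n) ^ (-σ))).mpr
      (summable_rpow_neg_add_succ hx hσ)).mul_left C
  calc ‖∑' n : ℕ+, f (x + n)‖ ≤ ∑' n : ℕ+, C * (x + n) ^ (-σ) :=
        tsum_of_norm_bounded hsum.hasSum fun n => hbound _ (by linarith [n.pos])
    _ ≤ C * (x ^ (1 - σ) / (σ - 1)) := by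
        rw [tsum_mul_left]
        exact mul_le_mul_of_nonneg_left (tsum_pnat_rpow_neg_add_le hx hσ) hC
    _ = C / (σ - 1) * ‖x ^ (1 - σ)‖ := by
        rw [Real.norm_of_nonneg (by positivity)]
        ring

theorem isBigO_rpow_neg_re_of_tendsto_mul_cpow {u : ℝ → ℂ} {s c : ℂ}
    (hu : Tendsto (fun x : ℝ => u x * (x : ℂ) ^ s) atTop (𝓝 c)) :
    u =O[atTop] fun x => x ^ (-s.re) := by
  have hcpow : (fun x : ℝ => (x : ℂ) ^ (-s)) =O[atTop] fun x => x ^ (-s.re) := by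
    refine (IsTheta.of_norm_eventuallyEq ?_).isBigO
    filter_upwards [eventually_gt_atTop 0] with x hx
    rw [Complex.norm_cpow_eq_rpow_re_of_pos hx, Complex.neg_re]
  have hprod := (hu.isBigO_one ℝ).mul hcpow
  simp only [one_mul] at hprod
  refine hprod.congr' ?_ EventuallyEq.rfl
  filter_upwards [eventually_gt_atTop 0] with x hx
  rw [Complex.cpow_neg, mul_assoc, mul_inv_cancel₀ (by simp [hx.ne']), mul_one]

theorem stmt_6_general (u : ℝ → ℂ) (s : ℂ)
    (hσ : 1 < s.re)
    (hasymp : Tendsto (fun x : ℝ => u x * (x : ℂ) ^ s) atTop (𝓝 1)) :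
    (fun x : ℝ => ∑' n : ℕ+, u (x + (n : ℝ))) =O[atTop]
      (fun x : ℝ => x ^ (1 - s.re)) :=
  isBigO_tsum_pnat_add_of_isBigO_rpow_neg hσ (isBigO_rpow_neg_re_of_tendsto_mul_cpow hasymp)

theorem stmt_6 (u : ℝ → ℂ) (s : ℂ) (x₀ : ℝ) (hx₀ : 0 < x₀)
    (hσ : 1 < s.re)
    (hcont : ContinuousOn u (Set.Ici x₀))
    (hasymp : Tendsto (fun x : ℝ => u x * (x : ℂ) ^ s) atTop (𝓝 1)) :
    (fun x : ℝ => ∑' n : ℕ+, u (x + (n : ℝ))) =O[atTop]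
      (fun x : ℝ => x ^ (1 - s.re)) :=
  stmt_6_general u s hσ hasymp
end

section
/- Let u : ℝ → ℂ be continuous on [x₀, ∞), x₀ > 0, with u(x) ~ x^{-s} as x → ∞ for s = σ + iτ with 0 < σ ≤ 1, and suppose Σ_{n=1}^∞ u(x+n) converges uniformly on [x₀, ∞). Then the function x ↦ Σ_{n=1}^∞ u(x+n) is bounded on [x₀, ∞). -/
open Filter Topology

/-!
Since `σ ≥ 0`, `‖u x‖ ≤ ‖u x · x^s‖` for `x ≥ 1`, and the right side converges, so `u` is bounded
near infinity; being continuous on `[x₀, ∞)` it is bounded there by some `B`. Each partial sum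
`∑_{n=1}^N u (x + n)` is then bounded by `N B` on `[x₀, ∞)`, and a uniform limit of bounded
functions is bounded.
-/

lemma isBoundedUnder_norm_of_tendsto_mul_cpow {u : ℝ → ℂ} {s c : ℂ} (hs : 0 ≤ s.re)
    (h : Tendsto (fun x : ℝ => u x * (x : ℂ) ^ s) atTop (𝓝 c)) :
    IsBoundedUnder (· ≤ ·) atTop (fun x => ‖u x‖) := by
  refine h.norm.isBoundedUnder_le.mono_le ?_
  filter_upwards [eventually_ge_atTop 1] with x hx
  rw [norm_mul, Complex.norm_cpow_eq_rpow_re_of_pos (by linarith)]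
  exact le_mul_of_one_le_right (norm_nonneg _) (Real.one_le_rpow hx hs)

lemma ContinuousOn.exists_forall_norm_le_Ici {E : Type*} [NormedAddCommGroup E] {u : ℝ → E}
    {a : ℝ} (hu : ContinuousOn u (Set.Ici a)) (h : IsBoundedUnder (· ≤ ·) atTop (fun x => ‖u x‖)) :
    ∃ C, ∀ x ∈ Set.Ici a, ‖u x‖ ≤ C := by
  obtain ⟨C₁, hC₁⟩ := h
  obtain ⟨M, hM⟩ := eventually_atTop.1 (eventually_map.1 hC₁)
  obtain ⟨C₂, hC₂⟩ := (isCompact_Icc (a := a) (b := M)).exists_bound_of_continuousOn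
    (hu.mono Set.Icc_subset_Ici_self)
  refine ⟨max C₁ C₂, fun x hx => ?_⟩
  rcases le_total x M with hxM | hMx
  · exact (hC₂ x ⟨hx, hxM⟩).trans (le_max_right _ _)
  · exact (hM x hMx).trans (le_max_left _ _)

lemma TendstoUniformlyOn.exists_forall_norm_le {ι α E : Type*} [NormedAddCommGroup E]
    {F : ι → α → E} {f : α → E} {l : Filter ι} [l.NeBot] {S : Set α}
    (h : TendstoUniformlyOn F f l S) (hF : ∀ᶠ i in l, ∃ C, ∀ x ∈ S, ‖F i x‖ ≤ C) :
    ∃ C, ∀ x ∈ S, ‖f x‖ ≤ C := by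
  obtain ⟨i, hclose, C, hC⟩ := ((Metric.tendstoUniformlyOn_iff.1 h 1 one_pos).and hF).exists
  refine ⟨C + 1, fun x hx => ?_⟩
  calc ‖f x‖ ≤ ‖F i x‖ + ‖f x - F i x‖ := norm_le_norm_add_norm_sub' _ _
    _ ≤ C + 1 := add_le_add (hC x hx) (by simpa [dist_eq_norm] using (hclose x hx).le)

theorem stmt_7_general (u : ℝ → ℂ) (f : ℝ → ℂ) (s : ℂ) (x₀ : ℝ)
    (hσ₁ : 0 < s.re)
    (hcont : ContinuousOn u (Set.Ici x₀))
    (hasymp : Tendsto (fun x : ℝ => u x * (x : ℂ) ^ s) atTop (𝓝 1))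
    (hunif : TendstoUniformlyOn
      (fun (N : ℕ) (x : ℝ) => ∑ n ∈ Finset.Icc 1 N, u (x + (n : ℝ)))
      f atTop (Set.Ici x₀)) :
    ∃ C : ℝ, ∀ x ∈ Set.Ici x₀, ‖f x‖ ≤ C := by
  obtain ⟨B, hB⟩ :=
    hcont.exists_forall_norm_le_Ici (isBoundedUnder_norm_of_tendsto_mul_cpow hσ₁.le hasymp)
  refine hunif.exists_forall_norm_le (Eventually.of_forall fun N =>
    ⟨∑ _n ∈ Finset.Icc 1 N, B, fun x hx => norm_sum_le_of_le _ fun n _ => hB _ ?_⟩)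
  exact le_add_of_le_of_nonneg hx (Nat.cast_nonneg (α := ℝ) n)

theorem stmt_7 (u : ℝ → ℂ) (f : ℝ → ℂ) (s : ℂ) (x₀ : ℝ) (hx₀ : 0 < x₀)
    (hσ₁ : 0 < s.re) (hσ₂ : s.re ≤ 1)
    (hcont : ContinuousOn u (Set.Ici x₀))
    (hasymp : Tendsto (fun x : ℝ => u x * (x : ℂ) ^ s) atTop (𝓝 1))
    (hunif : TendstoUniformlyOn
      (fun (N : ℕ) (x : ℝ) => ∑ n ∈ Finset.Icc 1 N, u (x + (n : ℝ)))
      f atTop (Set.Ici x₀)) :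
    ∃ C : ℝ, ∀ x ∈ Set.Ici x₀, ‖f x‖ ≤ C :=
  stmt_7_general u f s x₀ hσ₁ hcont hasymp hunif
end

section
/- For s ∈ ℂ with Re(s) > 1 and x > 0, Σ_{n=1}^∞ (x+n)^{-s} = (1/Γ(s)) ∫_0^∞ t^{s-1} e^{-xt} / (e^t - 1) dt. -/
open MeasureTheory Real

/-!
Since `e^{-xt} / (e^t - 1) = ∑_{n ≥ 1} e^{-(x+n)t}` for `t > 0`, and
`∫₀^∞ t^{s-1} e^{-at} dt = Γ(s) a^{-s}`, integrating term by term gives `Γ(s) ∑ (x+n)^{-s}`.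
The interchange is justified by the convergence of `∑ (x+n)^{-Re s}` for `Re s > 1`
(this is `hasSum_mellin`).
-/

theorem hasSum_exp_neg_add_pnat_mul (x : ℝ) {t : ℝ} (ht : 0 < t) :
    HasSum (fun n : ℕ+ ↦ rexp (-(x + (n : ℕ)) * t)) (rexp (-x * t) / (rexp t - 1)) := by
  have hgeo := (hasSum_geometric_of_lt_one (exp_pos (-t)).le
    (exp_lt_one_iff.mpr (neg_neg_of_pos ht))).mul_left (rexp (-x * t) * rexp (-t))
  have hvalue : rexp (-x * t) * rexp (-t) * (1 - rexp (-t))⁻¹ = rexp (-x * t) / (rexp t - 1) := by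
    have : rexp t - 1 ≠ 0 := (sub_pos.mpr (one_lt_exp_iff.mpr ht)).ne'
    rw [exp_neg t]
    field_simp
  rw [← hvalue, ← Equiv.pnatEquivNat.symm.hasSum_iff]
  refine hgeo.congr_fun fun n ↦ ?_
  simp only [Function.comp_apply, Equiv.pnatEquivNat_symm_apply, Nat.succPNat_coe]
  rw [← exp_nat_mul, ← exp_add, ← exp_add]
  push_cast
  ring_nf

theorem summable_one_div_add_pnat_rpow {x : ℝ} (hx : 0 ≤ x) {σ : ℝ} (hσ : 1 < σ) :
    Summable fun n : ℕ+ ↦ 1 / (x + (n : ℕ)) ^ σ := by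
  refine (((summable_one_div_nat_add_rpow x σ).mpr hσ).comp_injective
    PNat.coe_injective).congr fun n ↦ ?_
  rw [Function.comp_apply, abs_of_nonneg (by positivity), add_comm]

theorem hasSum_Gamma_div_add_pnat_cpow {x : ℝ} (hx : 0 ≤ x) {s : ℂ} (hs : 1 < s.re) :
    HasSum (fun n : ℕ+ ↦ Complex.Gamma s / ((x : ℂ) + (n : ℕ)) ^ s)
      (mellin (fun t : ℝ ↦ Complex.exp (-(x : ℂ) * t) / (Complex.exp t - 1)) s) := by
  have hexpand (t : ℝ) (ht : t ∈ Set.Ioi 0) : HasSum (fun n : ℕ+ ↦ 1 * (rexp (-(x + (n : ℕ)) * t) : ℂ))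
      (Complex.exp (-(x : ℂ) * t) / (Complex.exp t - 1)) := by
    simpa using (Complex.ofRealCLM.hasSum (hasSum_exp_neg_add_pnat_mul x ht))
  refine (hasSum_mellin (fun n ↦ Or.inr (by positivity)) (zero_lt_one.trans hs) hexpand ?_).congr_fun
    fun n ↦ ?_
  · simpa using summable_one_div_add_pnat_rpow hx hs
  · push_cast
    ring

theorem stmt_8 (s : ℂ) (hs : 1 < s.re) (x : ℝ) (hx : 0 < x) :
    (∑' n : ℕ+, ((x : ℂ) + (n : ℕ)) ^ (-s)) =
      (1 / Complex.Gamma s) *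
        ∫ t in Set.Ioi (0 : ℝ),
          (t : ℂ) ^ (s - 1) * Complex.exp (-(x : ℂ) * t) / (Complex.exp t - 1) := by
  have hGamma : Complex.Gamma s ≠ 0 := Complex.Gamma_ne_zero_of_re_pos (zero_lt_one.trans hs)
  refine (((hasSum_Gamma_div_add_pnat_cpow hx.le hs).mul_left (1 / Complex.Gamma s)).congr_fun
    fun n ↦ ?_).tsum_eq.trans ?_
  · rw [Complex.cpow_neg, mul_div_assoc', one_div_mul_cancel hGamma, one_div]
  · simp only [mellin, smul_eq_mul, mul_div_assoc]
end

section
/- Suppose that for every τ ∈ ℝ, Σ_{n=1}^∞ μ(n)/(n+x)^{3/2 + iτ} = O(1/x) as x → ∞. Then every nontrivial zero ρ of the Riemann zeta function satisfies Re(ρ) = 1/2 (the Riemann Hypothesis). -/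
/-!
Take `s = 3/2` and `F(x) = ∑ μ(n) (n + x)^(-s)`. The half-line Beta integral
`∫₀^∞ x^(w-1) (n + x)^(-s) dx = n^(w-s) Γ(w) Γ(s-w) / Γ(s)`, summed against `μ(n)`, gives
`𝓜F(w) = Γ(w) Γ(s-w) / (Γ(s) ζ(s-w))` for `0 < Re w < Re s - 1`. Since `F` is bounded near `0`
and `F(x) = O(1/x)`, the Mellin transform `𝓜F` is holomorphic on `0 < Re w < 1`, so the identity
`ζ(z) 𝓜F(s-z) = Γ(s-z) Γ(z) / Γ(s)` continues from `Re z > 1` to `Re s - 1 < Re z < 1`, where its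
right side does not vanish. The functional equation reflects the remaining zeros into that strip.
-/

open ArithmeticFunction Filter Complex
open scoped ArithmeticFunction.Moebius
open Set MeasureTheory Asymptotics
open scoped Topology

lemma image_div_one_sub_Ioo : (fun t : ℝ => t / (1 - t)) '' Ioo 0 1 = Ioi 0 := by
  ext y
  constructor
  · rintro ⟨t, ⟨ht0, ht1⟩, rfl⟩
    exact div_pos ht0 (by linarith)
  · intro (hy : 0 < y)
    refine ⟨y / (1 + y), ⟨by positivity, (div_lt_one (by linarith)).2 (by linarith)⟩, ?_⟩
    field_simp
    ring

lemma hasDerivAt_div_one_sub {t : ℝ} (ht : t ≠ 1) :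
    HasDerivAt (fun t : ℝ => t / (1 - t)) ((1 - t) ^ 2)⁻¹ t := by
  have h1t : 1 - t ≠ 0 := sub_ne_zero.2 (Ne.symm ht)
  have h := (hasDerivAt_id t).div ((hasDerivAt_id t).const_sub 1) h1t
  rwa [show (1 * (1 - id t) - id t * -1) / (1 - id t) ^ 2 = ((1 - t) ^ 2)⁻¹ by
    simp only [id]; field_simp; ring] at h

lemma injOn_div_one_sub : InjOn (fun t : ℝ => t / (1 - t)) (Ioo 0 1) := by
  intro a ⟨_, ha⟩ b ⟨_, hb⟩ hab
  have : 1 - a ≠ 0 := by linarith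
  have : 1 - b ≠ 0 := by linarith
  field_simp at hab
  linarith

lemma mellin_one_add_cpow_neg {s w : ℂ} (hw : 0 < w.re) (hws : w.re < s.re) :
    mellin (fun x : ℝ => ((1 + x : ℝ) : ℂ) ^ (-s)) w =
      Gamma w * Gamma (s - w) / Gamma s := by
  have hsw : 0 < (s - w).re := by rw [sub_re]; linarith
  have hΓ : Gamma w * Gamma (s - w) = Gamma s * betaIntegral w (s - w) := by
    simpa using Gamma_mul_Gamma_eq_betaIntegral hw hsw
  rw [mellin, ← image_div_one_sub_Ioo, integral_image_eq_integral_abs_deriv_smul measurableSet_Ioo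
    (fun t ht => (hasDerivAt_div_one_sub ht.2.ne).hasDerivWithinAt) injOn_div_one_sub,
    eq_div_iff (Gamma_ne_zero_of_re_pos (by linarith)), hΓ, mul_comm, betaIntegral,
    intervalIntegral.integral_of_le zero_le_one, integral_Ioc_eq_integral_Ioo]
  congr 1
  refine setIntegral_congr_fun measurableSet_Ioo fun t ⟨ht0, ht1⟩ => ?_
  have h1t : 0 < 1 - t := by linarith
  have h1t' : ((1 - t : ℝ) : ℂ) ≠ 0 := ofReal_ne_zero.2 h1t.ne'
  have harg : ((1 - t : ℝ) : ℂ).arg ≠ Real.pi := by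
    rw [arg_ofReal_of_nonneg h1t.le]; exact Real.pi_ne_zero.symm
  rw [show 1 + t / (1 - t) = (1 - t)⁻¹ by field_simp; ring, div_eq_mul_inv, ofReal_mul,
    mul_cpow_ofReal_nonneg ht0.le (inv_nonneg.2 h1t.le), ofReal_inv, inv_cpow _ _ harg,
    inv_cpow _ _ harg, ← cpow_neg, ← cpow_neg, neg_neg, abs_of_pos (by positivity), real_smul,
    ofReal_inv, ofReal_pow, ← cpow_ofNat, ← cpow_neg, show (1 : ℂ) - t = ((1 - t : ℝ) : ℂ) by simp]
  calc ((1 - t : ℝ) : ℂ) ^ (-(2 : ℂ)) * ((t : ℂ) ^ (w - 1) * ((1 - t : ℝ) : ℂ) ^ (-(w - 1))) •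
        ((1 - t : ℝ) : ℂ) ^ s
      = (t : ℂ) ^ (w - 1) * (((1 - t : ℝ) : ℂ) ^ (-(2 : ℂ)) * ((1 - t : ℝ) : ℂ) ^ (-(w - 1)) *
        ((1 - t : ℝ) : ℂ) ^ s) := by rw [smul_eq_mul]; ring
    _ = (t : ℂ) ^ (w - 1) * ((1 - t : ℝ) : ℂ) ^ (s - w - 1) := by
      rw [← cpow_add _ _ h1t', ← cpow_add _ _ h1t']
      ring_nf

lemma norm_ofReal_cpow_neg_le {b c : ℝ} (hb : 0 < b) (hbc : b ≤ c) {s : ℂ} (hs : 0 ≤ s.re) :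
    ‖(c : ℂ) ^ (-s)‖ ≤ b ^ (-s.re) := by
  rw [norm_cpow_eq_rpow_re_of_pos (hb.trans_le hbc), neg_re]
  exact Real.rpow_le_rpow_of_nonpos hb hbc (neg_nonpos.2 hs)

lemma mellinConvergent_add_cpow_neg {a : ℝ} (ha : 0 < a) {s w : ℂ} (hw : 0 < w.re)
    (hws : w.re < s.re) : MellinConvergent (fun x : ℝ => ((a + x : ℝ) : ℂ) ^ (-s)) w := by
  have hs : 0 ≤ s.re := by linarith
  refine mellinConvergent_of_isBigO_rpow (a := s.re) (b := 0) ?_ ?_ hws ?_ hw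
  · refine ContinuousOn.locallyIntegrableOn (fun x (hx : 0 < x) => ?_) measurableSet_Ioi
    refine ((continuousAt_cpow_const ?_).comp (by fun_prop)).continuousWithinAt
    exact ofReal_mem_slitPlane.2 (by positivity)
  · refine IsBigO.of_bound 1 ?_
    filter_upwards [eventually_gt_atTop 0] with x hx
    rw [one_mul, Real.norm_of_nonneg (by positivity)]
    exact norm_ofReal_cpow_neg_le hx (by linarith) hs
  · refine IsBigO.of_bound (a ^ (-s.re)) ?_
    filter_upwards [self_mem_nhdsWithin] with x (hx : 0 < x)
    rw [neg_zero, Real.rpow_zero, norm_one, mul_one]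
    exact norm_ofReal_cpow_neg_le ha (by linarith) hs

lemma integral_Ioi_eq_smul_of_comp_mul_left {E : Type*} [NormedAddCommGroup E] [NormedSpace ℝ E]
    {f g : ℝ → E} {a : ℝ} (ha : 0 < a) (h : ∀ y > 0, f (a * y) = g y) :
    ∫ x in Ioi 0, f x = a • ∫ y in Ioi 0, g y := by
  rw [← setIntegral_congr_fun measurableSet_Ioi h, integral_comp_mul_left_Ioi f 0 ha, mul_zero,
    smul_smul, mul_inv_cancel₀ ha.ne', one_smul]

lemma cpow_mul_add_cpow_neg_comp_mul_left {a y : ℝ} (ha : 0 < a) (hy : 0 < y) (s w : ℂ) :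
    ((a * y : ℝ) : ℂ) ^ (w - 1) * ((a + a * y : ℝ) : ℂ) ^ (-s) =
      (a : ℂ) ^ (w - 1 - s) * ((y : ℂ) ^ (w - 1) * ((1 + y : ℝ) : ℂ) ^ (-s)) := by
  rw [show a + a * y = a * (1 + y) by ring, ofReal_mul, ofReal_mul,
    mul_cpow_ofReal_nonneg ha.le hy.le, mul_cpow_ofReal_nonneg ha.le (by positivity),
    sub_eq_add_neg (w - 1), cpow_add _ _ (ofReal_ne_zero.2 ha.ne')]
  ring

lemma mellin_add_cpow_neg {a : ℝ} (ha : 0 < a) (s w : ℂ) :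
    mellin (fun x : ℝ => ((a + x : ℝ) : ℂ) ^ (-s)) w =
      (a : ℂ) ^ (w - s) * mellin (fun x : ℝ => ((1 + x : ℝ) : ℂ) ^ (-s)) w := by
  simp only [mellin, smul_eq_mul]
  rw [integral_Ioi_eq_smul_of_comp_mul_left ha
    (fun y hy => cpow_mul_add_cpow_neg_comp_mul_left ha hy s w), integral_const_mul, real_smul,
    ← mul_assoc]
  congr 1
  nth_rewrite 1 [← cpow_one (a : ℂ)]
  rw [← cpow_add _ _ (ofReal_ne_zero.2 ha.ne')]
  ring_nf

lemma integral_norm_cpow_mul_add_cpow_neg {a : ℝ} (ha : 0 < a) (s w : ℂ) :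
    ∫ x : ℝ in Ioi 0, ‖(x : ℂ) ^ (w - 1) * ((a + x : ℝ) : ℂ) ^ (-s)‖ =
      a ^ (w.re - s.re) * ∫ x : ℝ in Ioi 0, ‖(x : ℂ) ^ (w - 1) * ((1 + x : ℝ) : ℂ) ^ (-s)‖ := by
  rw [integral_Ioi_eq_smul_of_comp_mul_left ha (fun y hy => by
    rw [cpow_mul_add_cpow_neg_comp_mul_left ha hy s w, norm_mul]), integral_const_mul, smul_eq_mul,
    ← mul_assoc, norm_cpow_eq_rpow_re_of_pos ha]
  congr 1
  nth_rewrite 1 [← Real.rpow_one a]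
  rw [← Real.rpow_add ha, sub_re, sub_re, one_re]
  ring_nf

lemma hasSum_mellin_add_cpow_neg {ι : Type*} [Countable ι] {c : ι → ℂ} {p : ι → ℝ} {F : ℝ → ℂ}
    {s w : ℂ} (hp : ∀ i, 0 < p i) (hw : 0 < w.re) (hws : w.re < s.re)
    (hF : ∀ x ∈ Ioi (0 : ℝ), HasSum (fun i => c i * ((p i + x : ℝ) : ℂ) ^ (-s)) (F x))
    (hsum : Summable fun i => ‖c i‖ * p i ^ (w.re - s.re)) :
    HasSum (fun i => c i * (p i : ℂ) ^ (w - s) * (Gamma w * Gamma (s - w) / Gamma s))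
      (mellin F w) := by
  simp_rw [mellin, smul_eq_mul, ← setIntegral_congr_fun measurableSet_Ioi
    (fun x hx => congr_arg _ (hF x hx).tsum_eq), ← tsum_mul_left]
  convert! hasSum_integral_of_summable_integral_norm
    (F := fun i (x : ℝ) => (x : ℂ) ^ (w - 1) * (c i * ((p i + x : ℝ) : ℂ) ^ (-s)))
    (fun i => ?_) ?_ using 2 with i
  · simp_rw [mul_left_comm _ (c i), integral_const_mul, mul_assoc,
      ← mellin_one_add_cpow_neg hw hws, ← mellin_add_cpow_neg (hp i)]
    rfl
  · simp_rw [mul_left_comm _ (c i)]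
    exact (mellinConvergent_add_cpow_neg (hp i) hw hws).const_mul (c i)
  · simp_rw [mul_left_comm _ (c _), norm_mul (c _), integral_const_mul,
      integral_norm_cpow_mul_add_cpow_neg (hp _), ← mul_assoc]
    exact hsum.mul_right _

lemma summable_pnat_rpow_neg {σ : ℝ} (hσ : 1 < σ) : Summable fun n : ℕ+ => ((n : ℕ) : ℝ) ^ (-σ) :=
  (Real.summable_nat_rpow.2 (by linarith)).comp_injective PNat.coe_injective

noncomputable def shiftedMoebiusSum (s : ℂ) (x : ℝ) : ℂ :=
  ∑' n : ℕ+, (μ (n : ℕ) : ℂ) / ((n : ℕ) + (x : ℂ)) ^ s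

namespace shiftedMoebiusSum

variable {s : ℂ}

lemma term_eq (s : ℂ) (n : ℕ+) (x : ℝ) :
    (μ (n : ℕ) : ℂ) / ((n : ℕ) + (x : ℂ)) ^ s =
      μ (n : ℕ) * ((((n : ℕ) : ℝ) + x : ℝ) : ℂ) ^ (-s) := by
  rw [cpow_neg, div_eq_mul_inv]
  push_cast
  rfl

lemma norm_term_le (hs : 0 ≤ s.re) (n : ℕ+) {x : ℝ} (hx : 0 ≤ x) :
    ‖(μ (n : ℕ) : ℂ) / ((n : ℕ) + (x : ℂ)) ^ s‖ ≤ ((n : ℕ) : ℝ) ^ (-s.re) := by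
  rw [term_eq, norm_mul]
  refine (mul_le_of_le_one_left (norm_nonneg _) ?_).trans
    (norm_ofReal_cpow_neg_le (by positivity) (le_add_of_nonneg_right hx) hs)
  rw [norm_intCast]
  exact_mod_cast abs_moebius_le_one

lemma norm_le (hs : 1 < s.re) {x : ℝ} (hx : 0 ≤ x) :
    ‖shiftedMoebiusSum s x‖ ≤ ∑' n : ℕ+, ((n : ℕ) : ℝ) ^ (-s.re) :=
  tsum_of_norm_bounded (summable_pnat_rpow_neg hs).hasSum fun n => norm_term_le (by linarith) n hx

lemma continuousOn (hs : 1 < s.re) : ContinuousOn (shiftedMoebiusSum s) (Ioi 0) := by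
  refine continuousOn_tsum (fun n x (hx : 0 < x) => ?_) (summable_pnat_rpow_neg hs)
    fun n x (hx : 0 < x) => norm_term_le (by linarith) n hx.le
  have hnx : (0 : ℝ) < (n : ℕ) + x := by positivity
  refine (continuousAt_const.div ((continuousAt_cpow_const ?_).comp (by fun_prop))
    ?_).continuousWithinAt
  · exact_mod_cast ofReal_mem_slitPlane.2 hnx
  · exact cpow_ne_zero_iff.2 (Or.inl (show ((n : ℕ) : ℂ) + x ≠ 0 by exact_mod_cast hnx.ne'))

lemma summable_term (hs : 1 < s.re) {x : ℝ} (hx : 0 ≤ x) :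
    Summable fun n : ℕ+ => (μ (n : ℕ) : ℂ) / ((n : ℕ) + (x : ℂ)) ^ s :=
  (summable_pnat_rpow_neg hs).of_norm_bounded fun n => norm_term_le (by linarith) n hx

lemma isBigO_nhdsGT_zero (hs : 1 < s.re) :
    shiftedMoebiusSum s =O[𝓝[>] 0] (· ^ (-0 : ℝ)) := by
  refine IsBigO.of_bound (∑' n : ℕ+, ((n : ℕ) : ℝ) ^ (-s.re)) ?_
  filter_upwards [self_mem_nhdsWithin] with x (hx : 0 < x)
  simpa using norm_le hs hx.le

lemma differentiableAt_mellin (hs : 1 < s.re)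
    (hO : shiftedMoebiusSum s =O[atTop] (· ^ (-1 : ℝ))) {w : ℂ} (hw : 0 < w.re) (hw1 : w.re < 1) :
    DifferentiableAt ℂ (mellin (shiftedMoebiusSum s)) w :=
  mellin_differentiableAt_of_isBigO_rpow ((continuousOn hs).locallyIntegrableOn measurableSet_Ioi)
    hO hw1 (isBigO_nhdsGT_zero hs) hw

lemma mellin_eq {w : ℂ} (hw : 0 < w.re) (hws : w.re < s.re - 1) :
    mellin (shiftedMoebiusSum s) w =
      LSeries (fun n => μ n) (s - w) * (Gamma w * Gamma (s - w) / Gamma s) := by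
  have hs : 1 < s.re := by linarith
  have key := hasSum_mellin_add_cpow_neg (c := fun n : ℕ+ => (μ (n : ℕ) : ℂ))
    (p := fun n : ℕ+ => ((n : ℕ) : ℝ)) (F := shiftedMoebiusSum s) (fun n => by positivity) hw
    (by linarith)
    (fun x (hx : 0 < x) => by
      simpa only [shiftedMoebiusSum, term_eq] using (summable_term hs hx.le).hasSum)
    ((summable_pnat_rpow_neg (σ := s.re - w.re) (by linarith)).of_nonneg_of_le
      (fun n => by positivity) fun n => ?_)
  · have hterm : ∀ n : ℕ+, (μ (n : ℕ) : ℂ) * (((n : ℕ) : ℝ) : ℂ) ^ (w - s) =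
        LSeries.term (fun n => μ n) (s - w) n := by
      intro n
      rw [LSeries.term_of_ne_zero (PNat.ne_zero n), ofReal_natCast, div_eq_mul_inv, ← cpow_neg,
        neg_sub]
    simp_rw [hterm] at key
    rw [LSeries, ← tsum_mul_right, (hasSum_pnat_iff (f := fun n =>
      LSeries.term (fun n => (μ n : ℂ)) (s - w) n * (Gamma w * Gamma (s - w) / Gamma s))).1 key
      |>.tsum_eq, LSeries.term_zero, zero_mul, add_zero]
  · rw [neg_sub, norm_intCast]
    exact mul_le_of_le_one_left (by positivity) (by exact_mod_cast abs_moebius_le_one)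

end shiftedMoebiusSum

lemma riemannZeta_mul_mellin_shiftedMoebiusSum_of_one_lt_re {s z : ℂ} (hz : 1 < z.re)
    (hzs : z.re < s.re) :
    riemannZeta z * mellin (shiftedMoebiusSum s) (s - z) = Gamma (s - z) * Gamma z / Gamma s := by
  rw [shiftedMoebiusSum.mellin_eq (by rw [sub_re]; linarith) (by rw [sub_re]; linarith),
    sub_sub_cancel, ← mul_assoc, ← LSeries_zeta_eq_riemannZeta hz,
    LSeries_zeta_mul_Lseries_moebius hz, one_mul]

lemma ne_neg_natCast_of_re_pos {z : ℂ} (hz : 0 < z.re) (m : ℕ) : z ≠ -m := by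
  rintro rfl
  simp only [neg_re, natCast_re, Left.neg_pos_iff] at hz
  exact (Nat.cast_nonneg m).not_gt hz

lemma differentiableAt_riemannZeta_mul_mellin_shiftedMoebiusSum_sub {s z : ℂ} (hs : 1 < s.re)
    (hO : shiftedMoebiusSum s =O[atTop] (· ^ (-1 : ℝ))) (hz1 : z ≠ 1) (hz : s.re - 1 < z.re)
    (hzs : z.re < s.re) :
    DifferentiableAt ℂ (fun z => riemannZeta z * mellin (shiftedMoebiusSum s) (s - z) -
      Gamma (s - z) * Gamma z / Gamma s) z := by
  have hsz : 0 < (s - z).re := by rw [sub_re]; linarith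
  have hsub : DifferentiableAt ℂ (fun z => s - z) z :=
    (differentiableAt_const s).sub differentiableAt_id
  refine ((differentiableAt_riemannZeta hz1).mul ?_).sub
    ((((differentiableAt_Gamma _ (ne_neg_natCast_of_re_pos hsz)).comp z hsub).mul
      (differentiableAt_Gamma _ (ne_neg_natCast_of_re_pos (by linarith)))).div_const _)
  refine (shiftedMoebiusSum.differentiableAt_mellin hs hO hsz ?_).comp z hsub
  rw [sub_re]; linarith

lemma isPreconnected_re_preimage_Ioo_union {a b c : ℝ} (hab : a < b) (hbc : b ≤ c) :
    IsPreconnected (re ⁻¹' Ioo a b ∪ (re ⁻¹' Ioo a c ∩ im ⁻¹' Ioi 0)) := by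
  refine IsPreconnected.union ⟨(a + b) / 2, 1⟩ ?_ ?_
    ((convex_Ioo a b).linear_preimage reLm).isPreconnected
    (((convex_Ioo a c).linear_preimage reLm).inter
      ((convex_Ioi 0).linear_preimage imLm)).isPreconnected
  · exact ⟨show a < (a + b) / 2 by linarith, show (a + b) / 2 < b by linarith⟩
  · exact ⟨⟨show a < (a + b) / 2 by linarith, show (a + b) / 2 < c by linarith⟩,
      show (0 : ℝ) < 1 by norm_num⟩

/-- The continuation runs through the upper half-plane to avoid the pole of `ζ` at `1`. -/
lemma riemannZeta_mul_mellin_shiftedMoebiusSum_of_re_lt_one {s z : ℂ} (hs : 1 < s.re)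
    (hO : shiftedMoebiusSum s =O[atTop] (· ^ (-1 : ℝ))) (hz : s.re - 1 < z.re) (hz1 : z.re < 1) :
    riemannZeta z * mellin (shiftedMoebiusSum s) (s - z) = Gamma (s - z) * Gamma z / Gamma s := by
  set H : ℂ → ℂ := fun z =>
    riemannZeta z * mellin (shiftedMoebiusSum s) (s - z) - Gamma (s - z) * Gamma z / Gamma s
  set U := re ⁻¹' Ioo (s.re - 1) 1 ∪ (re ⁻¹' Ioo (s.re - 1) s.re ∩ im ⁻¹' Ioi 0)
  have hUo : IsOpen U := (isOpen_Ioo.preimage continuous_re).union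
    ((isOpen_Ioo.preimage continuous_re).inter (isOpen_Ioi.preimage continuous_im))
  have hH : DifferentiableOn ℂ H U := by
    rintro w (⟨hw, hw1⟩ | ⟨⟨hw, hws⟩, hwim : 0 < w.im⟩)
    · exact (differentiableAt_riemannZeta_mul_mellin_shiftedMoebiusSum_sub hs hO
        (fun h => by simp [h] at hw1) hw (by linarith)).differentiableWithinAt
    · exact (differentiableAt_riemannZeta_mul_mellin_shiftedMoebiusSum_sub hs hO
        (fun h => by simp [h] at hwim) hw hws).differentiableWithinAt
  have hz₀ : (⟨(1 + s.re) / 2, 1⟩ : ℂ) ∈ re ⁻¹' Ioo 1 s.re :=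
    ⟨show 1 < (1 + s.re) / 2 by linarith, show (1 + s.re) / 2 < s.re by linarith⟩
  have hH0 : H =ᶠ[𝓝 ⟨(1 + s.re) / 2, 1⟩] 0 := by
    filter_upwards [(isOpen_Ioo.preimage continuous_re).mem_nhds hz₀] with w ⟨hw, hws⟩
    simp [H, riemannZeta_mul_mellin_shiftedMoebiusSum_of_one_lt_re hw hws]
  have hU : IsPreconnected U := isPreconnected_re_preimage_Ioo_union (by linarith) hs.le
  exact sub_eq_zero.1 <| (hH.analyticOnNhd hUo).eqOn_zero_of_preconnected_of_eventuallyEq_zero hU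
    (Or.inr ⟨⟨by linarith [hz₀.1], hz₀.2⟩, show (0 : ℝ) < 1 by norm_num⟩) hH0 (Or.inl ⟨hz, hz1⟩)

theorem riemannZeta_ne_zero_of_shiftedMoebiusSum_isBigO {s : ℂ} (hs : 1 < s.re)
    (hO : shiftedMoebiusSum s =O[atTop] (· ^ (-1 : ℝ))) {ρ : ℂ} (hρ : s.re - 1 < ρ.re)
    (hρ1 : ρ.re < 1) : riemannZeta ρ ≠ 0 := by
  intro hζ
  have key := riemannZeta_mul_mellin_shiftedMoebiusSum_of_re_lt_one hs hO hρ hρ1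
  rw [hζ, zero_mul, eq_comm] at key
  refine div_ne_zero (mul_ne_zero ?_ ?_) (Gamma_ne_zero_of_re_pos (by linarith)) key
  · exact Gamma_ne_zero_of_re_pos (by rw [sub_re]; linarith)
  · exact Gamma_ne_zero_of_re_pos (by linarith)

theorem stmt_14
    (h : ∀ τ : ℝ, ∃ C : ℝ, ∀ᶠ x : ℝ in atTop,
      ‖∑' n : ℕ+, (μ (n : ℕ) : ℂ) / ((n : ℕ) + (x : ℂ)) ^ ((3 / 2 : ℂ) + τ * I)‖
        ≤ C / x) :
    ∀ ρ : ℂ, riemannZeta ρ = 0 → 0 < ρ.re → ρ.re < 1 → ρ.re = 1 / 2 := by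
  obtain ⟨C, hC⟩ := h 0
  have hO : shiftedMoebiusSum (3 / 2) =O[atTop] (· ^ (-1 : ℝ)) := by
    refine IsBigO.of_bound C ?_
    filter_upwards [hC, eventually_gt_atTop 0] with x hx hx0
    simpa [shiftedMoebiusSum, Real.rpow_neg_one, abs_of_pos hx0, div_eq_mul_inv] using hx
  have hfree {z : ℂ} (hz : 1 / 2 < z.re) (hz1 : z.re < 1) : riemannZeta z ≠ 0 :=
    riemannZeta_ne_zero_of_shiftedMoebiusSum_isBigO (by norm_num) hO (by norm_num; linarith) hz1
  intro ρ hζ h0 h1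
  by_contra hne
  rcases lt_or_gt_of_ne hne with hlt | hgt
  · refine hfree (z := 1 - ρ) (by simp; linarith) (by simp; linarith) ?_
    rw [riemannZeta_one_sub (ne_neg_natCast_of_re_pos h0) (fun h => by simp [h] at h1), hζ,
      mul_zero]
  · exact hfree hgt h1 hζ
end
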